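/- Let x ∈ ℤⁿ with minimum value k = min_i x_i, let n₀ = |{i : x_i = k}| and n₁ = |{i : x_i = k+1}|. With α_0 = 1 + 2p/(1-p)² and α_{±1} = -p/(1-p)² for p ∈ (0,1), the debiased estimator g(x) = Σ_{ξ ∈ {-1,0,1}ⁿ} min_i(x_i + ξ_i)·Π_j α_{ξ_j} equals (k - 1) + (α_0 + α_1)^{n₀} + α_1^{n₀}·(α_0 + α_1)^{n₁}. -/
import Mathlib


open scoped BigOperators

/-- Closed form of the debiased estimator of the minimum:
`g(x) = (k-1) + (α₀+α₁)^{n₀} + α₁^{n₀}(α₀+α₁)^{n₁}` where `k = min x`,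
`n₀ = #{i : xᵢ = k}` and `n₁ = #{i : xᵢ = k+1}`. -/
theorem debiased_min_closed_form
    (p : ℝ) (hp0 : 0 < p) (hp1 : p < 1) (n : ℕ) (x : Fin n → ℤ)
    (α : ℤ → ℝ)
    (hα : ∀ ξ : ℤ, α ξ = if ξ = 0 then 1 + 2 * p / (1 - p) ^ 2 else -p / (1 - p) ^ 2)
    (k : ℤ) (hmin : ∀ i, k ≤ x i) (hex : ∃ i, x i = k) :
    (∑ ξ ∈ Fintype.piFinset (fun _ : Fin n => ({-1, 0, 1} : Finset ℤ)),
        ((Finset.univ.inf' ⟨hex.choose, Finset.mem_univ _⟩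
            (fun i => x i + ξ i) : ℤ) : ℝ) * ∏ j, α (ξ j)) =
      ((k : ℝ) - 1) +
        (α 0 + α 1) ^ (Finset.univ.filter fun i => x i = k).card +
        α 1 ^ (Finset.univ.filter fun i => x i = k).card *
          (α 0 + α 1) ^ (Finset.univ.filter fun i => x i = k + 1).card := by
  classical
  have hne : ((1 - p) ^ 2) ≠ 0 := by
    have : (0:ℝ) < 1 - p := by linarith
    positivity
  have hα1 : α 1 = -p / (1 - p) ^ 2 := by rw [hα]; norm_num
  have hαm1 : α (-1) = -p / (1 - p) ^ 2 := by rw [hα]; norm_num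
  have hα0 : α 0 = 1 + 2 * p / (1 - p) ^ 2 := by rw [hα]; norm_num
  have hsum3 : α (-1) + (α 0 + α 1) = 1 := by
    rw [hαm1, hα0, hα1]; field_simp; ring
  have hSfull : ∑ s ∈ ({-1, 0, 1} : Finset ℤ), α s = 1 := by
    rw [Finset.sum_insert (by decide), Finset.sum_insert (by decide),
      Finset.sum_singleton]
    exact hsum3
  have hi₀ : x hex.choose = k := hex.choose_spec
  set i₀ := hex.choose with hi₀def
  have key : ∀ ξ ∈ Fintype.piFinset (fun _ : Fin n => ({-1, 0, 1} : Finset ℤ)),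
      ((Finset.univ.inf' ⟨hex.choose, Finset.mem_univ _⟩
          (fun i => x i + ξ i) : ℤ) : ℝ) * ∏ j, α (ξ j)
      = ((k : ℝ) - 1) * ∏ j, α (ξ j)
        + (if ∀ i, k ≤ x i + ξ i then ∏ j, α (ξ j) else 0)
        + (if ∀ i, k + 1 ≤ x i + ξ i then ∏ j, α (ξ j) else 0) := by
    intro ξ hξ
    have hmem : ∀ i, ξ i ∈ ({-1, 0, 1} : Finset ℤ) := by
      simpa [Fintype.mem_piFinset] using hξ
    have hrange : ∀ i, -1 ≤ ξ i ∧ ξ i ≤ 1 := by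
      intro i
      have := hmem i
      simp only [Finset.mem_insert, Finset.mem_singleton] at this
      omega
    set m := Finset.univ.inf' ⟨hex.choose, Finset.mem_univ _⟩
      (fun i => x i + ξ i) with hm
    have hmle : ∀ i, m ≤ x i + ξ i := fun i => Finset.inf'_le _ (Finset.mem_univ i)
    have hlem : ∀ c : ℤ, (∀ i, c ≤ x i + ξ i) → c ≤ m := by
      intro c h
      exact Finset.le_inf' _ _ (fun i _ => h i)
    by_cases h2 : ∀ i, k + 1 ≤ x i + ξ i
    · have hmk : m = k + 1 := by
        have h1 := hmle i₀
        have h2' := (hrange i₀).2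
        have := hlem _ h2
        omega
      have h1 : ∀ i, k ≤ x i + ξ i := fun i => by have := h2 i; omega
      rw [hmk, if_pos h1, if_pos h2]
      push_cast; ring
    · by_cases h1 : ∀ i, k ≤ x i + ξ i
      · have hmk : m = k := by
          push_neg at h2
          obtain ⟨i, hi⟩ := h2
          have := hmle i
          have := hlem _ h1
          omega
        rw [hmk, if_pos h1, if_neg h2]
        push_cast; ring
      · have hmk : m = k - 1 := by
          push_neg at h1
          obtain ⟨i, hi⟩ := h1
          have := hmle i
          have := hlem (k - 1) (fun i => by have := (hrange i).1; have := hmin i; omega)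
          omega
        rw [hmk, if_neg h1, if_neg h2]
        push_cast; ring
  rw [Finset.sum_congr rfl key, Finset.sum_add_distrib, Finset.sum_add_distrib]
  have hF : ∑ ξ ∈ Fintype.piFinset (fun _ : Fin n => ({-1, 0, 1} : Finset ℤ)),
      ∏ j, α (ξ j) = 1 := by
    rw [← Finset.prod_univ_sum]
    simp [hSfull]
  -- term 1
  have ht1 : ∑ ξ ∈ Fintype.piFinset (fun _ : Fin n => ({-1, 0, 1} : Finset ℤ)),
      ((k : ℝ) - 1) * ∏ j, α (ξ j) = (k : ℝ) - 1 := by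
    rw [← Finset.mul_sum, hF, mul_one]
  -- term 2
  set S₁ : Fin n → Finset ℤ := fun i => if x i = k then {0, 1} else {-1, 0, 1} with hS₁def
  have hfilter1 : (Fintype.piFinset (fun _ : Fin n => ({-1, 0, 1} : Finset ℤ))).filter
      (fun ξ => ∀ i, k ≤ x i + ξ i) = Fintype.piFinset S₁ := by
    ext ξ
    simp only [Finset.mem_filter, Fintype.mem_piFinset, hS₁def]
    constructor
    · rintro ⟨h, h'⟩ i
      have hi := h i
      have hi' := h' i
      split_ifs with hx
      · simp only [Finset.mem_insert, Finset.mem_singleton] at hi ⊢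
        omega
      · exact hi
    · intro h
      have hall : ∀ i, ξ i ∈ ({-1, 0, 1} : Finset ℤ) ∧ k ≤ x i + ξ i := by
        intro i
        have hi := h i
        have hk := hmin i
        split_ifs at hi with hx
        · simp only [Finset.mem_insert, Finset.mem_singleton] at hi ⊢
          omega
        · refine ⟨hi, ?_⟩
          simp only [Finset.mem_insert, Finset.mem_singleton] at hi
          omega
      exact ⟨fun i => (hall i).1, fun i => (hall i).2⟩
  have ht2 : ∑ ξ ∈ Fintype.piFinset (fun _ : Fin n => ({-1, 0, 1} : Finset ℤ)),
      (if ∀ i, k ≤ x i + ξ i then ∏ j, α (ξ j) else 0)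
      = (α 0 + α 1) ^ (Finset.univ.filter fun i => x i = k).card := by
    rw [← Finset.sum_filter, hfilter1, ← Finset.prod_univ_sum]
    have : ∀ j, ∑ s ∈ S₁ j, α s = if x j = k then α 0 + α 1 else 1 := by
      intro j
      simp only [hS₁def]
      split_ifs
      · rw [Finset.sum_insert (by decide), Finset.sum_singleton]
      · exact hSfull
    rw [Finset.prod_congr rfl (fun j _ => this j), Finset.prod_ite,
      Finset.prod_const, Finset.prod_const, one_pow, mul_one]
  -- term 3
  set S₂ : Fin n → Finset ℤ := fun i =>
    if x i = k then {1} else if x i = k + 1 then {0, 1} else {-1, 0, 1} with hS₂def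
  have hfilter2 : (Fintype.piFinset (fun _ : Fin n => ({-1, 0, 1} : Finset ℤ))).filter
      (fun ξ => ∀ i, k + 1 ≤ x i + ξ i) = Fintype.piFinset S₂ := by
    ext ξ
    simp only [Finset.mem_filter, Fintype.mem_piFinset, hS₂def]
    constructor
    · rintro ⟨h, h'⟩ i
      have hi := h i
      have hi' := h' i
      split_ifs with hx hx'
      · simp only [Finset.mem_insert, Finset.mem_singleton] at hi ⊢
        omega
      · simp only [Finset.mem_insert, Finset.mem_singleton] at hi ⊢
        omega
      · exact hi
    · intro h
      have hall : ∀ i, ξ i ∈ ({-1, 0, 1} : Finset ℤ) ∧ k + 1 ≤ x i + ξ i := by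
        intro i
        have hi := h i
        have hk := hmin i
        split_ifs at hi with hx hx'
        · simp only [Finset.mem_insert, Finset.mem_singleton] at hi ⊢
          omega
        · simp only [Finset.mem_insert, Finset.mem_singleton] at hi ⊢
          omega
        · refine ⟨hi, ?_⟩
          simp only [Finset.mem_insert, Finset.mem_singleton] at hi
          omega
      exact ⟨fun i => (hall i).1, fun i => (hall i).2⟩
  have ht3 : ∑ ξ ∈ Fintype.piFinset (fun _ : Fin n => ({-1, 0, 1} : Finset ℤ)),
      (if ∀ i, k + 1 ≤ x i + ξ i then ∏ j, α (ξ j) else 0)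
      = α 1 ^ (Finset.univ.filter fun i => x i = k).card *
          (α 0 + α 1) ^ (Finset.univ.filter fun i => x i = k + 1).card := by
    rw [← Finset.sum_filter, hfilter2, ← Finset.prod_univ_sum]
    have : ∀ j, ∑ s ∈ S₂ j, α s
        = if x j = k then α 1 else if x j = k + 1 then α 0 + α 1 else 1 := by
      intro j
      simp only [hS₂def]
      split_ifs
      · rw [Finset.sum_singleton]
      · rw [Finset.sum_insert (by decide), Finset.sum_singleton]
      · exact hSfull
    rw [Finset.prod_congr rfl (fun j _ => this j), Finset.prod_ite,
      Finset.prod_const, Finset.prod_ite, Finset.prod_const, Finset.prod_const,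
      one_pow, mul_one, Finset.filter_filter]
    have hff : Finset.filter (fun a => ¬x a = k ∧ x a = k + 1) (Finset.univ : Finset (Fin n))
        = Finset.univ.filter (fun i => x i = k + 1) := by
      apply Finset.filter_congr
      intro a _
      constructor
      · rintro ⟨_, h⟩; exact h
      · intro h; exact ⟨by omega, h⟩
    rw [hff]
  rw [ht1, ht2, ht3]
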